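/- arXiv:1005.1052 — 7 statements merged into one kernel-verified Lean document; each statement's English description precedes it below -/
import Mathlib

section
/- Let X be a metric space, B ⊆ X a nonempty subset, n ≥ 1, F : B → ℝⁿ a map, and δ ≥ 0 such that | d(x,y) − ‖F(x) − F(y)‖ | ≤ δ for all x, y ∈ B. Let v ∈ ℝⁿ be a unit vector and define φ_v : X → ℝ by φ_v(x) = inf_{y∈B} ( d(x,y) + ⟨F(y), v⟩ ). Then for every x ∈ B one has ⟨F(x), v⟩ − δ ≤ φ_v(x) ≤ ⟨F(x), v⟩. -/
open scoped RealInnerProductSpace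

theorem inner_sub_le_dist_add {X E : Type*} [PseudoMetricSpace X] [NormedAddCommGroup E]
    [InnerProductSpace ℝ E] {F : X → E} {x y : X} {δ : ℝ} (hF : ‖F x - F y‖ ≤ dist x y + δ)
    {v : E} (hv : ‖v‖ ≤ 1) : ⟪F x, v⟫ - δ ≤ dist x y + ⟪F y, v⟫ := by
  have : ⟪F x, v⟫ - ⟪F y, v⟫ ≤ ‖F x - F y‖ :=
    calc ⟪F x, v⟫ - ⟪F y, v⟫ = ⟪F x - F y, v⟫ := (inner_sub_left _ _ _).symm
      _ ≤ ‖F x - F y‖ * ‖v‖ := real_inner_le_norm _ _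
      _ ≤ ‖F x - F y‖ := mul_le_of_le_one_right (norm_nonneg _) hv
  linarith

theorem stmt1_general {X : Type*} [MetricSpace X] (B : Set X)
    (n : ℕ) (F : B → EuclideanSpace ℝ (Fin n)) (δ : ℝ)
    (hF : ∀ x y : B, |dist (x : X) (y : X) - ‖F x - F y‖| ≤ δ)
    (v : EuclideanSpace ℝ (Fin n)) (hv : ‖v‖ = 1)
    (φv : X → ℝ) (hφv : ∀ x : X, φv x = ⨅ y : B, (dist x (y : X) + ⟪F y, v⟫)) :
    ∀ x : B, ⟪F x, v⟫ - δ ≤ φv (x : X) ∧ φv (x : X) ≤ ⟪F x, v⟫ := by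
  intro x
  have : Nonempty B := ⟨x⟩
  have hlower : ∀ y : B, ⟪F x, v⟫ - δ ≤ dist (x : X) y + ⟪F y, v⟫ := fun y =>
    inner_sub_le_dist_add (by rw [Subtype.dist_eq]; linarith [(abs_le.1 (hF x y)).1]) hv.le
  rw [hφv]
  exact ⟨le_ciInf hlower,
    (ciInf_le ⟨_, Set.forall_mem_range.2 hlower⟩ x).trans_eq (by simp)⟩

/-- If `F : B → ℝⁿ` almost preserves distances up to an additive
error `δ`, and `φ_v x = inf_{y ∈ B} (d(x,y) + ⟨F y, v⟩)` for a unit vector `v`,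
then `⟨F x, v⟩ - δ ≤ φ_v x ≤ ⟨F x, v⟩` for every `x ∈ B`. -/
theorem stmt1 {X : Type*} [MetricSpace X] (B : Set X) (hBne : B.Nonempty)
    (n : ℕ) (hn : 1 ≤ n) (F : B → EuclideanSpace ℝ (Fin n)) (δ : ℝ) (hδ : 0 ≤ δ)
    (hF : ∀ x y : B, |dist (x : X) (y : X) - ‖F x - F y‖| ≤ δ)
    (v : EuclideanSpace ℝ (Fin n)) (hv : ‖v‖ = 1)
    (φv : X → ℝ) (hφv : ∀ x : X, φv x = ⨅ y : B, (dist x (y : X) + ⟪F y, v⟫)) :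
    ∀ x : B, ⟪F x, v⟫ - δ ≤ φv (x : X) ∧ φv (x : X) ≤ ⟪F x, v⟫ :=
  stmt1_general B n F δ hF v hv φv hφv
end

section
/- Let X be a metric space, B ⊆ X a nonempty subset, n ≥ 1, F : B → ℝⁿ a map, and δ ≥ 0 such that | d(x,y) − ‖F(x) − F(y)‖ | ≤ δ for all x, y ∈ B. Define φ : X → ℝⁿ by φ(x) = (φ_{e_1}(x), …, φ_{e_n}(x)). Then ‖φ(x) − F(x)‖ ≤ √n · δ for every x ∈ B. -/
open scoped RealInnerProductSpace

/-!
For `x ∈ B` and a unit vector `v`, taking `y = x` gives `φ_v x ≤ ⟪F x, v⟫`, while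
`⟪F x - F y, v⟫ ≤ ‖F x - F y‖ ≤ d(x, y) + δ` gives `⟪F x, v⟫ - δ ≤ φ_v x`. So every coordinate
of `φ x - F x` has absolute value at most `δ`, and the Euclidean norm is at most `√n · δ`.
-/

section InfConvolution

variable {X E : Type*} [MetricSpace X] [NormedAddCommGroup E] [InnerProductSpace ℝ E]
  {B : Set X} {F : B → E} {δ : ℝ} {v : E}

theorem inner_sub_le_dist_add_inner (hF : ∀ x y : B, ‖F x - F y‖ ≤ dist (x : X) y + δ)
    (hv : ‖v‖ ≤ 1) (x y : B) : ⟪F x, v⟫ - δ ≤ dist (x : X) y + ⟪F y, v⟫ := by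
  have : ⟪F x - F y, v⟫ ≤ ‖F x - F y‖ :=
    (real_inner_le_norm _ _).trans (mul_le_of_le_one_right (norm_nonneg _) hv)
  rw [inner_sub_left] at this
  linarith [hF x y]

theorem abs_iInf_dist_add_inner_sub_inner_le
    (hF : ∀ x y : B, ‖F x - F y‖ ≤ dist (x : X) y + δ) (hv : ‖v‖ ≤ 1) (x : B) :
    |(⨅ y : B, (dist (x : X) y + ⟪F y, v⟫)) - ⟪F x, v⟫| ≤ δ := by
  have hpointwise := inner_sub_le_dist_add_inner hF hv x
  have hinf_le : (⨅ y : B, (dist (x : X) y + ⟪F y, v⟫)) ≤ ⟪F x, v⟫ := by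
    simpa using ciInf_le ⟨_, Set.forall_mem_range.mpr hpointwise⟩ x
  have hle_inf : ⟪F x, v⟫ - δ ≤ ⨅ y : B, (dist (x : X) y + ⟪F y, v⟫) :=
    have : Nonempty B := ⟨x⟩
    le_ciInf hpointwise
  rw [abs_le]
  constructor <;> linarith

end InfConvolution

theorem norm_le_sqrt_card_mul_of_forall_abs_inner_le {ι E : Type*} [Fintype ι]
    [NormedAddCommGroup E] [InnerProductSpace ℝ E] (b : OrthonormalBasis ι ℝ E) {x : E} {δ : ℝ}
    (hδ : 0 ≤ δ) (h : ∀ i, |⟪b i, x⟫| ≤ δ) : ‖x‖ ≤ √(Fintype.card ι) * δ :=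
  (b.norm_le_card_mul_iSup_norm_inner x).trans <| by gcongr; exact Real.iSup_le h hδ

theorem stmt2_general {X : Type*} [MetricSpace X] (B : Set X)
    (n : ℕ) (F : B → EuclideanSpace ℝ (Fin n)) (δ : ℝ) (hδ : 0 ≤ δ)
    (hF : ∀ x y : B, |dist (x : X) (y : X) - ‖F x - F y‖| ≤ δ)
    (φ : X → EuclideanSpace ℝ (Fin n))
    (hφ : ∀ (x : X) (i : Fin n),
      φ x i = ⨅ y : B, (dist x (y : X) + ⟪F y, EuclideanSpace.single i (1 : ℝ)⟫)) :
    ∀ x : B, ‖φ (x : X) - F x‖ ≤ Real.sqrt n * δ := by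
  intro x
  have hF_le : ∀ x y : B, ‖F x - F y‖ ≤ dist (x : X) y + δ := fun x y => by
    linarith [(abs_le.mp (hF x y)).1]
  have hcoord (i : Fin n) : |⟪EuclideanSpace.basisFun (Fin n) ℝ i, φ x - F x⟫| ≤ δ := by
    simpa [hφ, EuclideanSpace.inner_single_left, EuclideanSpace.inner_single_right] using
      abs_iInf_dist_add_inner_sub_inner_le hF_le (v := EuclideanSpace.single i 1) (by simp) x
  simpa using norm_le_sqrt_card_mul_of_forall_abs_inner_le _ hδ hcoord

/-- With `F : B → ℝⁿ` almost preserving distances up to `δ`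
and `φ = (φ_{e_1}, …, φ_{e_n})` where `φ_v x = inf_{y ∈ B} (d(x,y) + ⟨F y, v⟩)`
and `(e_i)` is the standard orthonormal basis, one has
`‖φ x − F x‖ ≤ √n · δ` for every `x ∈ B`. -/
theorem stmt2 {X : Type*} [MetricSpace X] (B : Set X) (hBne : B.Nonempty)
    (n : ℕ) (hn : 1 ≤ n) (F : B → EuclideanSpace ℝ (Fin n)) (δ : ℝ) (hδ : 0 ≤ δ)
    (hF : ∀ x y : B, |dist (x : X) (y : X) - ‖F x - F y‖| ≤ δ)
    (φ : X → EuclideanSpace ℝ (Fin n))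
    (hφ : ∀ (x : X) (i : Fin n),
      φ x i = ⨅ y : B, (dist x (y : X) + ⟪F y, EuclideanSpace.single i (1 : ℝ)⟫)) :
    ∀ x : B, ‖φ (x : X) - F x‖ ≤ Real.sqrt n * δ :=
  stmt2_general B n F δ hδ hF φ hφ
end

section
/- Let X be a metric space, B ⊆ X a nonempty subset, n ≥ 1, F : B → ℝⁿ a map, and δ ≥ 0 such that | d(x,y) − ‖F(x) − F(y)‖ | ≤ δ for all x, y ∈ B. Define φ : X → ℝⁿ by φ(x) = (φ_{e_1}(x), …, φ_{e_n}(x)). Then | ‖φ(x) − φ(y)‖ − d(x,y) | ≤ (2√n + 1) δ for all x, y ∈ B. -/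
open scoped RealInnerProductSpace

/-! For `x ∈ B` the infimum defining `φ_{e_i}(x)` is at most `F(x)_i` (take `y = x`) and at least
`F(x)_i - δ`, because each coordinate of `F` is `1`-Lipschitz up to the additive error `δ`. Hence
`φ(x)` lies within `√n δ` of `F(x)` on `B`, and the triangle inequality turns the `δ`-distortion
of `F` into the distortion `2√n δ + δ` of `φ`. -/

theorem EuclideanSpace.norm_le_sqrt_card_mul {𝕜 ι : Type*} [RCLike 𝕜] [Fintype ι]
    {v : EuclideanSpace 𝕜 ι} {C : ℝ} (hv : ∀ i, ‖v i‖ ≤ C) :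
    ‖v‖ ≤ √(Fintype.card ι) * C := by
  rcases isEmpty_or_nonempty ι with hι | ⟨⟨i₀⟩⟩
  · simp [Subsingleton.elim v 0]
  have hC : 0 ≤ C := (norm_nonneg _).trans (hv i₀)
  calc ‖v‖ = √(∑ i, ‖v i‖ ^ 2) := EuclideanSpace.norm_eq v
    _ ≤ √(∑ _i : ι, C ^ 2) := by gcongr with i; exact hv i
    _ = √(Fintype.card ι) * C := by
      rw [Finset.sum_const, Finset.card_univ, nsmul_eq_mul, Real.sqrt_mul (Nat.cast_nonneg _),
        Real.sqrt_sq hC]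

theorem abs_iInf_dist_add_sub_le {X : Type*} [PseudoMetricSpace X] {B : Set X} {f : B → ℝ}
    {δ : ℝ} (hf : ∀ x z : B, f x - f z ≤ dist (x : X) z + δ) (x : B) :
    |(⨅ z : B, (dist (x : X) z + f z)) - f x| ≤ δ := by
  have hlower : ∀ z : B, f x - δ ≤ dist (x : X) z + f z := fun z => by linarith [hf x z]
  have hbdd : BddBelow (Set.range fun z : B => dist (x : X) z + f z) :=
    ⟨f x - δ, Set.forall_mem_range.2 hlower⟩
  have hle : (⨅ z : B, (dist (x : X) z + f z)) ≤ f x := by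
    simpa using ciInf_le hbdd x
  have hge : f x - δ ≤ ⨅ z : B, (dist (x : X) z + f z) :=
    have : Nonempty B := ⟨x⟩
    le_ciInf hlower
  rw [abs_le]
  constructor <;> linarith

theorem abs_norm_sub_sub_le_add {E : Type*} [SeminormedAddCommGroup E] (a b a' b' : E) (r : ℝ) :
    |‖a - b‖ - r| ≤ ‖a - a'‖ + ‖b - b'‖ + |‖a' - b'‖ - r| := by
  have hnorm : |‖a - b‖ - ‖a' - b'‖| ≤ ‖a - a'‖ + ‖b - b'‖ :=
    calc |‖a - b‖ - ‖a' - b'‖| ≤ ‖(a - b) - (a' - b')‖ := abs_norm_sub_norm_le _ _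
      _ = ‖(a - a') - (b - b')‖ := by congr 1; abel
      _ ≤ ‖a - a'‖ + ‖b - b'‖ := norm_sub_le _ _
  linarith [abs_sub_le (‖a - b‖) ‖a' - b'‖ r]

theorem stmt3_general {X : Type*} [MetricSpace X] (B : Set X)
    (n : ℕ) (F : B → EuclideanSpace ℝ (Fin n)) (δ : ℝ)
    (hF : ∀ x y : B, |dist (x : X) (y : X) - ‖F x - F y‖| ≤ δ)
    (φ : X → EuclideanSpace ℝ (Fin n))
    (hφ : ∀ (x : X) (i : Fin n),
      φ x i = ⨅ y : B, (dist x (y : X) + ⟪F y, EuclideanSpace.single i (1 : ℝ)⟫)) :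
    ∀ x y : B,
      |‖φ (x : X) - φ (y : X)‖ - dist (x : X) (y : X)| ≤ (2 * Real.sqrt n + 1) * δ := by
  have hcoord_lip : ∀ (i : Fin n) (x z : B), F x i - F z i ≤ dist (x : X) z + δ := fun i x z =>
    calc F x i - F z i ≤ ‖F x - F z‖ := by
          simpa using (le_abs_self _).trans (PiLp.norm_apply_le (F x - F z) i)
      _ ≤ dist (x : X) z + δ := by linarith [(abs_le.1 (hF x z)).1]
  have hnear : ∀ x : B, ‖φ x - F x‖ ≤ √n * δ := fun x => by
    simpa using EuclideanSpace.norm_le_sqrt_card_mul (v := φ x - F x) fun i => by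
      simpa [hφ, EuclideanSpace.inner_single_right] using abs_iInf_dist_add_sub_le (hcoord_lip i) x
  intro x y
  calc |‖φ x - φ y‖ - dist (x : X) y|
      ≤ ‖φ x - F x‖ + ‖φ y - F y‖ + |‖F x - F y‖ - dist (x : X) y| :=
        abs_norm_sub_sub_le_add _ _ _ _ _
    _ ≤ √n * δ + √n * δ + δ := by
        gcongr
        · exact hnear x
        · exact hnear y
        · rw [abs_sub_comm]; exact hF x y
    _ = (2 * Real.sqrt n + 1) * δ := by ring

/-- With `F : B → ℝⁿ` almost preserving distances up to `δ`
and `φ = (φ_{e_1}, …, φ_{e_n})` where `φ_v x = inf_{y ∈ B} (d(x,y) + ⟨F y, v⟩)`,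
one has `| ‖φ x − φ y‖ − d(x,y) | ≤ (2√n + 1) δ` for all `x, y ∈ B`. -/
theorem stmt3 {X : Type*} [MetricSpace X] (B : Set X) (hBne : B.Nonempty)
    (n : ℕ) (hn : 1 ≤ n) (F : B → EuclideanSpace ℝ (Fin n)) (δ : ℝ) (hδ : 0 ≤ δ)
    (hF : ∀ x y : B, |dist (x : X) (y : X) - ‖F x - F y‖| ≤ δ)
    (φ : X → EuclideanSpace ℝ (Fin n))
    (hφ : ∀ (x : X) (i : Fin n),
      φ x i = ⨅ y : B, (dist x (y : X) + ⟪F y, EuclideanSpace.single i (1 : ℝ)⟫)) :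
    ∀ x y : B,
      |‖φ (x : X) - φ (y : X)‖ - dist (x : X) (y : X)| ≤ (2 * Real.sqrt n + 1) * δ :=
  stmt3_general B n F δ hF φ hφ
end

section
/- Let f : ℝⁿ → ℝⁿ be a map such that each coordinate function x ↦ f(x)_i (i = 1,…,n) is 1-Lipschitz with respect to the Euclidean distance on ℝⁿ. Then f does not increase Lebesgue measure: for every set A ⊆ ℝⁿ, the Lebesgue outer measure of the image f(A) is at most the Lebesgue outer measure of A. -/
/-!
A map with 1-Lipschitz coordinates is Lipschitz, hence differentiable almost everywhere
(Rademacher) and it sends null sets to null sets. At a point of differentiability the rows of the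
Jacobian matrix are the differentials of the coordinates, so they have norm at most one, and
Hadamard's inequality bounds the Jacobian by one. The change of variables inequality
`μ (f '' s) ≤ ∫⁻ x in s, |det f'(x)| ∂μ` on the differentiability set then gives the claim.
-/

open MeasureTheory Module
open scoped RealInnerProductSpace NNReal

section InnerProductSpace

variable {E : Type*} [NormedAddCommGroup E] [InnerProductSpace ℝ E]

theorem OrthonormalBasis.abs_det_le_prod_norm {n : ℕ} (b : OrthonormalBasis (Fin n) ℝ E)
    (v : Fin n → E) : |b.toBasis.det v| ≤ ∏ i, ‖v i‖ := by
  have : Fact (finrank ℝ E = n) := ⟨by simpa using finrank_eq_card_basis b.toBasis⟩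
  rw [← b.toBasis.orientation.volumeForm_robust' b]
  exact b.toBasis.orientation.abs_volumeForm_apply_le v

theorem OrthonormalBasis.lipschitzWith_of_lipschitzWith_inner {ι α : Type*} [Fintype ι]
    [PseudoMetricSpace α] (b : OrthonormalBasis ι ℝ E) {f : α → E} {K : ℝ≥0}
    (hf : ∀ i, LipschitzWith K fun x => ⟪b i, f x⟫) :
    LipschitzWith (NNReal.sqrt (Fintype.card ι) * K) f := by
  refine LipschitzWith.of_dist_le_mul fun x y => ?_
  have hcoord : ⨆ i, ‖⟪b i, f x - f y⟫‖ ≤ K * dist x y :=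
    Real.iSup_le (fun i => by
      simpa only [inner_sub_right, ← dist_eq_norm] using (hf i).dist_le_mul x y) (by positivity)
  calc dist (f x) (f y) = ‖f x - f y‖ := dist_eq_norm _ _
    _ ≤ √(Fintype.card ι) * ⨆ i, ‖⟪b i, f x - f y⟫‖ := b.norm_le_card_mul_iSup_norm_inner _
    _ ≤ √(Fintype.card ι) * (K * dist x y) := by gcongr
    _ = ↑(NNReal.sqrt (Fintype.card ι) * K) * dist x y := by
      rw [NNReal.coe_mul, Real.coe_sqrt, NNReal.coe_natCast, mul_assoc]

variable [FiniteDimensional ℝ E]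

theorem LinearMap.det_adjoint_eq_det (A : E →ₗ[ℝ] E) : (LinearMap.adjoint A).det = A.det := by
  let b := stdOrthonormalBasis ℝ E
  rw [← LinearMap.det_toMatrix b.toBasis, ← LinearMap.det_toMatrix b.toBasis,
    LinearMap.toMatrix_adjoint, Matrix.det_conjTranspose, star_trivial]

/-- Hadamard's inequality for the rows `⟪b i, A ·⟫ = ⟪A† (b i), ·⟫` of `A`. -/
theorem ContinuousLinearMap.abs_det_le_prod_norm_innerSL_comp {n : ℕ}
    (b : OrthonormalBasis (Fin n) ℝ E) (A : E →L[ℝ] E) :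
    |A.det| ≤ ∏ i, ‖(innerSL ℝ (b i)).comp A‖ := by
  have hrow : ∀ i, (innerSL ℝ (b i)).comp A = innerSL ℝ (A.adjoint (b i)) := fun i => by
    ext v
    simp [ContinuousLinearMap.adjoint_inner_left]
  have hdet : b.toBasis.det (A.adjoint ∘ b) = A.det := by
    have := b.toBasis.det_comp (A : E →ₗ[ℝ] E).adjoint b.toBasis
    rwa [Basis.det_self, mul_one, LinearMap.det_adjoint_eq_det, b.coe_toBasis] at this
  simp only [hrow, innerSL_apply_norm]
  rw [← hdet]
  exact b.abs_det_le_prod_norm _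

theorem OrthonormalBasis.abs_det_fderiv_le_one {n : ℕ} (b : OrthonormalBasis (Fin n) ℝ E)
    {f : E → E} (hf : ∀ i, LipschitzWith 1 fun x => ⟪b i, f x⟫) {x : E}
    (hx : DifferentiableAt ℝ f x) : |(fderiv ℝ f x).det| ≤ 1 := by
  have hrow : ∀ i, ‖(innerSL ℝ (b i)).comp (fderiv ℝ f x)‖ ≤ 1 := fun i => by
    have hderiv : fderiv ℝ (fun y => ⟪b i, f y⟫) x = (innerSL ℝ (b i)).comp (fderiv ℝ f x) :=
      ((innerSL ℝ (b i)).hasFDerivAt.comp x hx.hasFDerivAt).fderiv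
    simpa only [hderiv, NNReal.coe_one] using norm_fderiv_le_of_lipschitz ℝ (hf i) (x₀ := x)
  calc |(fderiv ℝ f x).det| ≤ ∏ i, ‖(innerSL ℝ (b i)).comp (fderiv ℝ f x)‖ :=
        (fderiv ℝ f x).abs_det_le_prod_norm_innerSL_comp b
    _ ≤ 1 := Finset.prod_le_one (fun i _ => norm_nonneg _) (fun i _ => hrow i)

end InnerProductSpace

section AddHaar

variable {E : Type*} [NormedAddCommGroup E] [NormedSpace ℝ E] [FiniteDimensional ℝ E]
  [MeasurableSpace E] [BorelSpace E] (μ : Measure E) [μ.IsAddHaarMeasure]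

/-- Lipschitz maps do not increase the Hausdorff measure `μH[finrank ℝ E]`, which is itself an
additive Haar measure, hence equivalent to `μ`. -/
theorem LipschitzWith.addHaar_image_eq_zero {f : E → E} {K : ℝ≥0} (hf : LipschitzWith K f)
    {s : Set E} (hs : μ s = 0) : μ (f '' s) = 0 := by
  have hHs : μH[finrank ℝ E] s = 0 := Measure.absolutelyContinuous_isAddHaarMeasure _ μ hs
  have hHfs : μH[finrank ℝ E] (f '' s) = 0 := by
    have := hf.hausdorffMeasure_image_le (Nat.cast_nonneg (finrank ℝ E)) s
    rwa [hHs, mul_zero, nonpos_iff_eq_zero] at this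
  exact Measure.absolutelyContinuous_isAddHaarMeasure μ _ hHfs

theorem LipschitzWith.addHaar_image_le_of_ae_abs_det_fderiv_le_one {f : E → E} {K : ℝ≥0}
    (hf : LipschitzWith K f) (hdet : ∀ᵐ x ∂μ, |(fderiv ℝ f x).det| ≤ 1) (s : Set E) :
    μ (f '' s) ≤ μ s := by
  set D := {x | DifferentiableAt ℝ f x}
  set S := toMeasurable μ s ∩ D
  have hS : MeasurableSet S :=
    (measurableSet_toMeasurable μ s).inter (measurableSet_of_differentiableAt ℝ f)
  have hDc : μ Dᶜ = 0 := ae_iff.1 hf.ae_differentiableAt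
  have hsub : f '' s ⊆ f '' S ∪ f '' Dᶜ := by
    rw [← Set.image_union]
    refine Set.image_mono fun x hx => ?_
    by_cases hxD : x ∈ D
    · exact Or.inl ⟨subset_toMeasurable μ s hx, hxD⟩
    · exact Or.inr hxD
  have hfS : μ (f '' S) ≤ μ s :=
    calc μ (f '' S) ≤ ∫⁻ x in S, ENNReal.ofReal |(fderiv ℝ f x).det| ∂μ :=
          addHaar_image_le_lintegral_abs_det_fderiv μ hS
            fun x hx => hx.2.hasFDerivAt.hasFDerivWithinAt
      _ ≤ ∫⁻ _ in S, 1 ∂μ :=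
          lintegral_mono_ae ((ae_restrict_of_ae hdet).mono fun x hx => ENNReal.ofReal_le_one.2 hx)
      _ = μ S := setLIntegral_one S
      _ ≤ μ s := (measure_mono Set.inter_subset_left).trans_eq (measure_toMeasurable s)
  calc μ (f '' s) ≤ μ (f '' S) + μ (f '' Dᶜ) := (measure_mono hsub).trans (measure_union_le _ _)
    _ ≤ μ s := by rw [hf.addHaar_image_eq_zero μ hDc, add_zero]; exact hfS

end AddHaar

theorem OrthonormalBasis.addHaar_image_le_of_lipschitzWith_inner {E : Type*}
    [NormedAddCommGroup E] [InnerProductSpace ℝ E] [FiniteDimensional ℝ E] [MeasurableSpace E]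
    [BorelSpace E] (μ : Measure E) [μ.IsAddHaarMeasure] {n : ℕ}
    (b : OrthonormalBasis (Fin n) ℝ E) {f : E → E}
    (hf : ∀ i, LipschitzWith 1 fun x => ⟪b i, f x⟫) (s : Set E) : μ (f '' s) ≤ μ s := by
  have hL := b.lipschitzWith_of_lipschitzWith_inner hf
  refine hL.addHaar_image_le_of_ae_abs_det_fderiv_le_one μ ?_ s
  filter_upwards [hL.ae_differentiableAt] with x hx using b.abs_det_fderiv_le_one hf hx

/-- A map `f : ℝⁿ → ℝⁿ` whose coordinate functions are all
1-Lipschitz does not increase Lebesgue (outer) measure of any set. -/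
theorem stmt4 (n : ℕ) (f : EuclideanSpace ℝ (Fin n) → EuclideanSpace ℝ (Fin n))
    (hf : ∀ i : Fin n, LipschitzWith 1 (fun x => f x i)) :
    ∀ A : Set (EuclideanSpace ℝ (Fin n)), volume (f '' A) ≤ volume A := by
  refine (EuclideanSpace.basisFun (Fin n) ℝ).addHaar_image_le_of_lipschitzWith_inner volume ?_
  simpa only [EuclideanSpace.basisFun_inner] using hf
end

section
/- Let X and Y be sets equipped with measures μ and ν respectively (applied to arbitrary subsets via the induced outer measures), with μ(X) < ∞, and let f : X → Y be a map such that ν( f(A) ) ≤ μ(A) for every subset A ⊆ X. Suppose ε ∈ [0,∞] satisfies ν( f(X) ) + ε ≥ μ(X). Then for every μ-measurable set E ⊆ X one has ν( f(E) ) + ε ≥ μ(E). -/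
open MeasureTheory

/- The images of `E` and `Eᶜ` cover `f(X)`, so `ν(f(X)) ≤ ν(f(E)) + μ(Eᶜ)`. Adding `ε` and using
`μ(X) = μ(E) + μ(Eᶜ)`, the finite quantity `μ(Eᶜ)` cancels. -/

lemma measure_image_univ_le_image_add_compl {X Y : Type*} [MeasurableSpace X]
    [MeasurableSpace Y] {μ : Measure X} {ν : Measure Y} {f : X → Y}
    (hf : ∀ A : Set X, ν (f '' A) ≤ μ A) (E : Set X) :
    ν (f '' Set.univ) ≤ ν (f '' E) + μ Eᶜ :=
  calc ν (f '' Set.univ) = ν (f '' E ∪ f '' Eᶜ) := by rw [← Set.image_union, Set.union_compl_self]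
    _ ≤ ν (f '' E) + ν (f '' Eᶜ) := measure_union_le _ _
    _ ≤ ν (f '' E) + μ Eᶜ := by gcongr; exact hf Eᶜ

/-- If `f : X → Y` does not increase measure (`ν(f(A)) ≤ μ(A)` for
every set `A`), `μ(X) < ∞`, and `ν(f(X)) + ε ≥ μ(X)`, then
`ν(f(E)) + ε ≥ μ(E)` for every measurable `E ⊆ X`. -/
theorem stmt9 {X Y : Type*} [MeasurableSpace X] [MeasurableSpace Y]
    (μ : Measure X) (ν : Measure Y) (hμfin : μ Set.univ < ⊤)
    (f : X → Y) (hf : ∀ A : Set X, ν (f '' A) ≤ μ A)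
    (ε : ENNReal) (hε : μ Set.univ ≤ ν (f '' Set.univ) + ε) :
    ∀ E : Set X, MeasurableSet E → μ E ≤ ν (f '' E) + ε := by
  intro E hE
  have hcompl : μ Eᶜ ≠ ⊤ := (measure_mono (Set.subset_univ _)).trans_lt hμfin |>.ne
  refine ENNReal.le_of_add_le_add_right hcompl ?_
  calc μ E + μ Eᶜ = μ Set.univ := measure_add_measure_compl hE
    _ ≤ ν (f '' Set.univ) + ε := hε
    _ ≤ ν (f '' E) + μ Eᶜ + ε := by gcongr; exact measure_image_univ_le_image_add_compl hf E
    _ = ν (f '' E) + ε + μ Eᶜ := add_right_comm _ _ _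
end

section
/- Let X be a metric space, μ a Borel measure on X, and γ : [0,1] → X a continuous curve with endpoints x = γ(0) and y = γ(1). Let r > 0 with d(x,y) ≥ r, let s > 0, and let ν ≥ 0 (an extended nonnegative real) be such that μ( B(γ(t), s) ) ≥ ν for every t ∈ [0,1]. Set N = ⌊ r/(2s) ⌋ + 1. Then μ( { w ∈ X : dist( w, γ([0,1]) ) < s } ) ≥ N · ν. -/
/-!
Walking along `γ` from `x = γ 0`, the distance to `x` runs continuously from `0` to
`d(x, y) ≥ r`, so the curve passes through points `x_k` at distance exactly `2 s k` from `x`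
for `k = 0, …, ⌊r/(2s)⌋`. The reverse triangle inequality puts these points pairwise at
distance `≥ 2 s`, so the balls `B(x_k, s)` are disjoint, and they all lie in the
`s`-neighbourhood of the curve.
-/

open MeasureTheory Metric Set Function

theorem Metric.disjoint_ball_ball_of_le_abs_dist_sub_dist {X : Type*} [PseudoMetricSpace X]
    {x y z : X} {ε δ : ℝ} (h : ε + δ ≤ |dist x y - dist x z|) :
    Disjoint (ball y ε) (ball z δ) :=
  ball_disjoint_ball <| h.trans <| by
    simpa only [dist_comm x] using abs_dist_sub_le y z x

theorem Metric.pairwise_disjoint_ball_of_dist_eq_mul_natCast {X ι : Type*} [PseudoMetricSpace X]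
    {x : X} {s : ℝ} (hs : 0 ≤ s) {p : ι → X} {n : ι → ℕ} (hn : Function.Injective n)
    (hp : ∀ i, dist x (p i) = 2 * s * n i) :
    Pairwise (Disjoint on fun i => ball (p i) s) := by
  intro i j hij
  apply disjoint_ball_ball_of_le_abs_dist_sub_dist
  have hgap : (1 : ℝ) ≤ |(n i : ℝ) - n j| := by
    have : (n i : ℤ) - n j ≠ 0 := sub_ne_zero.mpr (by exact_mod_cast hn.ne hij)
    exact_mod_cast Int.one_le_abs this
  rw [hp, hp, ← mul_sub, abs_mul, abs_of_nonneg (by positivity)]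
  nlinarith

theorem MeasureTheory.natCast_card_mul_le_measure_iUnion {X ι : Type*} [MeasurableSpace X]
    [Fintype ι] {μ : Measure X} {A : ι → Set X} {ν : ENNReal}
    (hdisj : Pairwise (Disjoint on A)) (hmeas : ∀ i, MeasurableSet (A i))
    (hν : ∀ i, ν ≤ μ (A i)) :
    (Fintype.card ι : ENNReal) * ν ≤ μ (⋃ i, A i) :=
  calc (Fintype.card ι : ENNReal) * ν = ∑ _ : ι, ν := by simp
    _ ≤ ∑ i, μ (A i) := Finset.sum_le_sum fun i _ => hν i
    _ = μ (⋃ i, A i) := by rw [measure_iUnion hdisj hmeas, tsum_fintype]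

theorem ContinuousOn.exists_mem_Icc_dist_eq {X : Type*} [PseudoMetricSpace X] {γ : ℝ → X}
    {a b : ℝ} (hab : a ≤ b) (hγ : ContinuousOn γ (Icc a b)) {c : ℝ} (hc₀ : 0 ≤ c)
    (hc : c ≤ dist (γ a) (γ b)) : ∃ t ∈ Icc a b, dist (γ a) (γ t) = c :=
  intermediate_value_Icc hab ((continuous_const.dist continuous_id).comp_continuousOn hγ)
    ⟨by simpa using hc₀, hc⟩

theorem mul_natCast_le_of_le_floor_div {s d r : ℝ} (hs : 0 < s) (hd : r ≤ d) (hd₀ : 0 ≤ d)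
    {k : ℕ} (hk : k ≤ ⌊r / s⌋₊) : s * k ≤ d := by
  have : (k : ℝ) ≤ d / s :=
    (Nat.cast_le.mpr (hk.trans (Nat.floor_le_floor (div_le_div_of_nonneg_right hd hs.le)))).trans
      (Nat.floor_le (div_nonneg hd₀ hs.le))
  rwa [le_div_iff₀ hs, mul_comm] at this

theorem stmt14_general {X : Type*} [MetricSpace X] [MeasurableSpace X] [BorelSpace X]
    (μ : Measure X) (γ : ℝ → X) (hγ : ContinuousOn γ (Set.Icc 0 1))
    (r : ℝ) (hxy : r ≤ dist (γ 0) (γ 1))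
    (s : ℝ) (hs : 0 < s) (ν : ENNReal)
    (hball : ∀ t ∈ Set.Icc (0 : ℝ) 1, ν ≤ μ (Metric.ball (γ t) s)) :
    (((Nat.floor (r / (2 * s)) + 1 : ℕ)) : ENNReal) * ν ≤
      μ {w : X | Metric.infDist w (γ '' Set.Icc 0 1) < s} := by
  have hpoints : ∀ k : Fin (⌊r / (2 * s)⌋₊ + 1),
      ∃ t ∈ Icc (0 : ℝ) 1, dist (γ 0) (γ t) = 2 * s * k := fun k =>
    hγ.exists_mem_Icc_dist_eq zero_le_one (by positivity) <|
      mul_natCast_le_of_le_floor_div (by positivity) hxy dist_nonneg (Nat.lt_succ_iff.mp k.isLt)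
  choose t ht hdist using hpoints
  have hsub : (⋃ k, ball (γ (t k)) s) ⊆ {w | infDist w (γ '' Icc 0 1) < s} :=
    iUnion_subset fun k w hw =>
      (infDist_le_dist_of_mem (mem_image_of_mem γ (ht k))).trans_lt (mem_ball.mp hw)
  calc _ = (Fintype.card (Fin (⌊r / (2 * s)⌋₊ + 1)) : ENNReal) * ν := by rw [Fintype.card_fin]
    _ ≤ μ (⋃ k, ball (γ (t k)) s) :=
      natCast_card_mul_le_measure_iUnion
        (pairwise_disjoint_ball_of_dist_eq_mul_natCast hs.le Fin.val_injective hdist)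
        (fun _ => measurableSet_ball) (fun k => hball (t k) (ht k))
    _ ≤ _ := measure_mono hsub

/-- Packing lemma along a curve: if `γ : [0,1] → X` is a
continuous curve with `d(γ 0, γ 1) ≥ r > 0`, `s > 0`, and every ball
`B(γ t, s)` has measure at least `ν`, then the open `s`-neighborhood of the
curve has measure at least `N·ν`, where `N = ⌊r/(2s)⌋ + 1`. -/
theorem stmt14 {X : Type*} [MetricSpace X] [MeasurableSpace X] [BorelSpace X]
    (μ : Measure X) (γ : ℝ → X) (hγ : ContinuousOn γ (Set.Icc 0 1))
    (r : ℝ) (hr : 0 < r) (hxy : r ≤ dist (γ 0) (γ 1))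
    (s : ℝ) (hs : 0 < s) (ν : ENNReal)
    (hball : ∀ t ∈ Set.Icc (0 : ℝ) 1, ν ≤ μ (Metric.ball (γ t) s)) :
    (((Nat.floor (r / (2 * s)) + 1 : ℕ)) : ENNReal) * ν ≤
      μ {w : X | Metric.infDist w (γ '' Set.Icc 0 1) < s} :=
  stmt14_general μ γ hγ r hxy s hs ν hball
end

section
/- Let E and F be real inner product spaces with dim E = n (1 ≤ n < ∞), and let T : E → F be a linear map such that Σ_{j=1}^{n} ‖ T(w_j) ‖² ≤ n for some orthonormal basis (w_1, …, w_n) of E. Then T does not increase n-dimensional Hausdorff measure: μH[n]( T(A) ) ≤ μH[n]( A ) for every set A ⊆ E. -/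
/-!
`T` scales `μH[n]` by `T.normDet = √(det G)`, where `G` is the Gram matrix of the vectors `T wⱼ`.
As `G` is positive semidefinite with trace `∑ ‖T wⱼ‖² ≤ n`, AM–GM applied to its eigenvalues gives
`det G ≤ (tr G / n) ^ n ≤ 1`.
-/

open MeasureTheory Finset

theorem Real.prod_le_arith_mean_pow {ι : Type*} (s : Finset ι) {z : ι → ℝ}
    (hz : ∀ i ∈ s, 0 ≤ z i) : ∏ i ∈ s, z i ≤ ((∑ i ∈ s, z i) / #s) ^ #s := by
  rcases s.eq_empty_or_nonempty with rfl | hs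
  · simp
  have hcard : (#s : ℝ) ≠ 0 := by exact_mod_cast hs.card_ne_zero
  have hmean : (∏ i ∈ s, z i) ^ (#s : ℝ)⁻¹ ≤ (∑ i ∈ s, z i) / #s := by
    rw [← Real.finsetProd_rpow _ _ hz, div_eq_inv_mul, mul_sum]
    exact Real.geom_mean_le_arith_mean_weighted s _ _ (fun _ _ ↦ by positivity)
      (by simp [hcard]) hz
  calc ∏ i ∈ s, z i = ((∏ i ∈ s, z i) ^ (#s : ℝ)⁻¹) ^ #s := by
        rw [← Real.rpow_mul_natCast (prod_nonneg hz), inv_mul_cancel₀ hcard, Real.rpow_one]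
    _ ≤ ((∑ i ∈ s, z i) / #s) ^ #s := by gcongr; exact Real.rpow_nonneg (prod_nonneg hz) _

theorem Matrix.PosSemidef.det_le_trace_div_card_pow {ι : Type*} [Fintype ι] [DecidableEq ι]
    {A : Matrix ι ι ℝ} (hA : A.PosSemidef) :
    A.det ≤ (A.trace / Fintype.card ι) ^ Fintype.card ι := by
  rw [hA.1.det_eq_prod_eigenvalues, hA.1.trace_eq_sum_eigenvalues]
  exact Real.prod_le_arith_mean_pow univ fun i _ ↦ hA.eigenvalues_nonneg i

theorem Matrix.trace_gram {𝕜 E ι : Type*} [RCLike 𝕜] [SeminormedAddCommGroup E]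
    [InnerProductSpace 𝕜 E] [Fintype ι] (v : ι → E) :
    (gram 𝕜 v).trace = ∑ i, (‖v i‖ : 𝕜) ^ 2 := by
  simp [Matrix.trace, inner_self_eq_norm_sq_to_K]

theorem LinearMap.normDet_le_one_of_sum_norm_sq_le {U V ι : Type*} [NormedAddCommGroup U]
    [InnerProductSpace ℝ U] [FiniteDimensional ℝ U] [NormedAddCommGroup V]
    [InnerProductSpace ℝ V] [Fintype ι] [DecidableEq ι] (f : U →ₗ[ℝ] V)
    (b : OrthonormalBasis ι ℝ U) (hf : ∑ i, ‖f (b i)‖ ^ 2 ≤ Fintype.card ι) :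
    f.normDet ≤ 1 := by
  have hgram := Matrix.posSemidef_gram ℝ (f <| b ·)
  have hsq : f.normDet ^ 2 ≤ 1 := by
    rw [show f.normDet ^ 2 = _ from f.normDet_sq_eq_det_gram b]
    refine hgram.det_le_trace_div_card_pow.trans (pow_le_one₀ ?_ ?_)
    · exact div_nonneg hgram.trace_nonneg (Nat.cast_nonneg _)
    · rw [Matrix.trace_gram]
      exact div_le_one_of_le₀ hf (Nat.cast_nonneg _)
  exact (sq_le_one_iff₀ f.normDet_nonneg).1 hsq

theorem stmt15_general {E F : Type*} [NormedAddCommGroup E] [InnerProductSpace ℝ E]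
    [NormedAddCommGroup F] [InnerProductSpace ℝ F]
    [MeasurableSpace E] [BorelSpace E] [MeasurableSpace F] [BorelSpace F]
    (n : ℕ) (hdim : Module.finrank ℝ E = n)
    (T : E →ₗ[ℝ] F) (w : OrthonormalBasis (Fin n) ℝ E)
    (hT : ∑ j : Fin n, ‖T (w j)‖ ^ 2 ≤ (n : ℝ)) :
    ∀ A : Set E, μH[(n : ℝ)] (T '' A) ≤ μH[(n : ℝ)] A := by
  intro A
  have : FiniteDimensional ℝ E := w.toBasis.finiteDimensional_of_finite
  have hnormDet : T.normDet ≤ 1 :=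
    T.normDet_le_one_of_sum_norm_sq_le w (by simpa using hT)
  rw [← hdim, T.hausdorffMeasure_image]
  exact mul_le_of_le_one_left zero_le (ENNReal.ofReal_le_one.2 hnormDet)

/-- If `T : E → F` is a linear map between real inner product
spaces, `dim E = n ≥ 1`, and `Σ ‖T wⱼ‖² ≤ n` for some orthonormal basis
`(w₁,…,wₙ)` of `E`, then `T` does not increase `n`-dimensional Hausdorff
measure. -/
theorem stmt15 {E F : Type*} [NormedAddCommGroup E] [InnerProductSpace ℝ E]
    [NormedAddCommGroup F] [InnerProductSpace ℝ F]
    [MeasurableSpace E] [BorelSpace E] [MeasurableSpace F] [BorelSpace F]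
    (n : ℕ) (hn : 1 ≤ n) (hdim : Module.finrank ℝ E = n)
    (T : E →ₗ[ℝ] F) (w : OrthonormalBasis (Fin n) ℝ E)
    (hT : ∑ j : Fin n, ‖T (w j)‖ ^ 2 ≤ (n : ℝ)) :
    ∀ A : Set E, μH[(n : ℝ)] (T '' A) ≤ μH[(n : ℝ)] A :=
  stmt15_general n hdim T w hT
end
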